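/- arXiv:2305.02441 — 3 statements merged into one kernel-verified Lean document; each statement's English description precedes it below -/
import Mathlib

section
/- Consider a K-armed bandit where every arm in a subset I ⊆ [K] always yields the same fixed constant reward γ ∈ [0,1]. If the UCB1 algorithm (choosing the arm maximizing sample mean plus sqrt(2 log t / N_k(t-1))) is run on this environment, then at any time t, the numbers of pulls of any two arms in I differ by at most 1; consequently, when τ total pulls have been made on arms in I, each arm in I has been pulled at least ⌊τ/|I|⌋ and at most ⌈τ/|I|⌉ times. -/
/-!
On the arms of `I` every empirical mean equals `γ`, so there the UCB1 index differs only by the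
exploration bonus `√(2 log t / N)`, which decreases in the pull count `N`. Hence UCB1 always pulls an arm
whose count is minimal over `I` (an unpulled arm has infinite index), and such pulls keep the pull
counts on `I` equitable, i.e. pairwise within one of each other. An equitable distribution of `τ`
pulls over `|I|` arms gives each arm between `⌊τ/|I|⌋` and `⌈τ/|I|⌉` of them.
-/

open Finset

theorem Finset.EquitableOn.le_add_card_sub_one_div_card {α : Type*} {s : Finset α} {f : α → ℕ}
    {a : α} (h : Set.EquitableOn (s : Set α) f) (ha : a ∈ s) :
    f a ≤ (∑ i ∈ s, f i + #s - 1) / #s := by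
  have hs : 0 < #s := card_pos.mpr ⟨a, ha⟩
  have hlt : #s * f a < ∑ i ∈ s, f i + #s := by
    calc #s * f a = ∑ _i ∈ s, f a := by rw [sum_const, smul_eq_mul]
      _ < ∑ i ∈ s, (f i + 1) :=
        sum_lt_sum (fun i hi => h ha hi) ⟨a, ha, Nat.lt_succ_self _⟩
      _ = ∑ i ∈ s, f i + #s := by rw [sum_add_distrib, card_eq_sum_ones]
  rw [Nat.le_div_iff_mul_le hs, mul_comm]
  omega

lemma le_of_sqrt_div_le_sqrt_div {c a b : ℝ} (hc : 0 < c) (ha : 0 < a) (hb : 0 < b)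
    (h : √(c / b) ≤ √(c / a)) : a ≤ b :=
  (div_le_div_iff_of_pos_left hc hb ha).mp (Real.sqrt_le_sqrt_iff (by positivity) |>.mp h)

section PullCount

variable {α : Type*} [DecidableEq α] (pol : ℕ → α)

def pullCount (k : α) (t : ℕ) : ℕ := #{s ∈ range t | pol s = k}

variable {pol}

lemma pullCount_zero (k : α) : pullCount pol k 0 = 0 := rfl

lemma pullCount_succ (k : α) (t : ℕ) :
    pullCount pol k (t + 1) = pullCount pol k t + if pol t = k then 1 else 0 := by
  simp only [pullCount, range_add_one, filter_insert]
  split_ifs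
  · rw [card_insert_of_notMem (by simp)]
  · rfl

lemma pullCount_add_pullCount_le {k k' : α} (hkk' : k ≠ k') (t : ℕ) :
    pullCount pol k t + pullCount pol k' t ≤ t := by
  calc pullCount pol k t + pullCount pol k' t
      ≤ #{s ∈ range t | pol s = k} + #{s ∈ range t | ¬pol s = k} :=
        Nat.add_le_add_left (card_le_card <| monotone_filter_right _ fun _ _ hs => hs ▸ hkk'.symm) _
    _ = t := by rw [card_filter_add_card_filter_not, card_range]

theorem equitableOn_pullCount {I : Finset α}
    (hleast : ∀ t, ∀ k ∈ I, pullCount pol (pol t) t ≤ pullCount pol k t) (t : ℕ) :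
    Set.EquitableOn (I : Set α) (pullCount pol · t) := by
  induction t with
  | zero => simp [pullCount_zero, Set.EquitableOn]
  | succ t ih =>
    intro k k' hk hk'
    have hle : pullCount pol k t ≤ pullCount pol k' t + 1 := ih hk hk'
    simp only [pullCount_succ]
    by_cases hpk : pol t = k
    · have := hleast t k' hk'
      subst hpk
      split_ifs <;> omega
    · split_ifs <;> omega

theorem pullCount_choice_le_of_maximizes_bonus {I : Finset α}
    (hinit : ∀ t, ∀ k ∈ I, pullCount pol k t = 0 → pullCount pol (pol t) t = 0)
    (hbonus : ∀ t, (∀ k ∈ I, 1 ≤ pullCount pol k t) → ∀ k ∈ I,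
      √(2 * Real.log t / pullCount pol k t) ≤ √(2 * Real.log t / pullCount pol (pol t) t))
    (t : ℕ) (k : α) (hk : k ∈ I) : pullCount pol (pol t) t ≤ pullCount pol k t := by
  rcases Nat.eq_zero_or_pos (pullCount pol (pol t) t) with hzero | hpos
  · omega
  by_cases hkt : k = pol t
  · rw [hkt]
  have hpulled : ∀ j ∈ I, 1 ≤ pullCount pol j t := fun j hj =>
    Nat.one_le_iff_ne_zero.mpr fun hj0 => hpos.ne' (hinit t j hj hj0)
  have ht : 1 < t := by
    have := pullCount_add_pullCount_le (pol := pol) hkt t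
    have := hpulled k hk
    omega
  have hlog : 0 < 2 * Real.log t := by
    have := Real.log_pos (Nat.one_lt_cast.mpr ht)
    positivity
  exact_mod_cast le_of_sqrt_div_le_sqrt_div hlog (by exact_mod_cast hpos)
    (by exact_mod_cast hpulled k hk) (hbonus t hpulled k hk)

end PullCount

theorem stmt_0_general (K : ℕ) (I : Finset (Fin K))
    (γ : ℝ)
    (pol : ℕ → Fin K) (N : Fin K → ℕ → ℕ)
    (hN : ∀ k t, N k t = ((Finset.range t).filter (fun s => pol s = k)).card)
    -- if some arm of I is still unpulled, UCB1 pulls an unpulled arm (infinite index)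
    (hinit : ∀ t, ∀ k ∈ I, N k t = 0 → N (pol t) t = 0)
    -- once every arm of I has been pulled, the chosen arm maximizes the UCB1 index
    (hUCB : ∀ t, (∀ k ∈ I, 1 ≤ N k t) → ∀ k ∈ I,
      γ + Real.sqrt (2 * Real.log t / (N k t : ℝ)) ≤
        γ + Real.sqrt (2 * Real.log t / (N (pol t) t : ℝ))) :
    (∀ t, ∀ k ∈ I, ∀ k' ∈ I, N k t ≤ N k' t + 1) ∧
    (∀ t τ, (∑ k ∈ I, N k t) = τ → ∀ k ∈ I,
      τ / I.card ≤ N k t ∧ N k t ≤ (τ + I.card - 1) / I.card) := by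
  obtain rfl : N = pullCount pol := funext₂ hN
  have hleast : ∀ t, ∀ k ∈ I, pullCount pol (pol t) t ≤ pullCount pol k t :=
    pullCount_choice_le_of_maximizes_bonus hinit fun t hpulled k hk =>
      (add_le_add_iff_left γ).mp (hUCB t hpulled k hk)
  have hequi := equitableOn_pullCount hleast
  refine ⟨fun t k hk k' hk' => hequi t hk hk', fun t τ hτ k hk => ?_⟩
  subst hτ
  exact ⟨EquitableOn.le (hequi t) hk, EquitableOn.le_add_card_sub_one_div_card (hequi t) hk⟩

/-- UCB1 on a set `I` of arms all yielding the constant reward `γ`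
pulls the arms in `I` in a balanced way: at any time the pull counts of any two
arms of `I` differ by at most 1, and hence when `τ` total pulls have been made
on `I`, each arm of `I` has between `⌊τ/|I|⌋` and `⌈τ/|I|⌉` pulls. -/
theorem stmt_0 (K : ℕ) (hK : 0 < K) (I : Finset (Fin K)) (hI : I.Nonempty)
    (γ : ℝ) (hγ : γ ∈ Set.Icc (0:ℝ) 1)
    (pol : ℕ → Fin K) (N : Fin K → ℕ → ℕ)
    (hN : ∀ k t, N k t = ((Finset.range t).filter (fun s => pol s = k)).card)
    (hmem : ∀ t, pol t ∈ I)
    -- if some arm of I is still unpulled, UCB1 pulls an unpulled arm (infinite index)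
    (hinit : ∀ t, ∀ k ∈ I, N k t = 0 → N (pol t) t = 0)
    -- once every arm of I has been pulled, the chosen arm maximizes the UCB1 index
    (hUCB : ∀ t, (∀ k ∈ I, 1 ≤ N k t) → ∀ k ∈ I,
      γ + Real.sqrt (2 * Real.log t / (N k t : ℝ)) ≤
        γ + Real.sqrt (2 * Real.log t / (N (pol t) t : ℝ))) :
    (∀ t, ∀ k ∈ I, ∀ k' ∈ I, N k t ≤ N k' t + 1) ∧
    (∀ t τ, (∑ k ∈ I, N k t) = τ → ∀ k ∈ I,
      τ / I.card ≤ N k t ∧ N k t ≤ (τ + I.card - 1) / I.card) :=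
  stmt_0_general K I γ pol N hN hinit hUCB
end

section
/- Let π(1), π(2), ... be i.i.d. uniform on [K] and fix an arm k. Let n' ≥ 1, and set τ' := ceil of (4K·log(2T))/(3μ²) + (32K·log T)/9 with n' = ⌈log(2T)/(2μ²)⌉ for some μ ∈ (0,1] and T ≥ 2. Then P( Σ_{t=1}^{τ'} 𝟙{π(t)=k} < n' ) ≤ 1/(2T). -/
/-!
The number of pulls of arm `k` among the first `τ'` rounds is a sum of `τ'` independent
indicators of probability `1/K`, with mean `m = τ'/K`. Chernoff's method, together with
`exp (-u) ≤ 1 - u + u²/2` for `u ≥ 0`, bounds the probability that such a sum is at most `a ≤ m`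
by `exp (-(m - a)² / (2m))`. For `a = n' - 1 ≤ log (2T) / (2μ²)` the choice of `τ'` makes this
exponent at least `log (2T)`.
-/

open MeasureTheory ProbabilityTheory Real

lemma Real.exp_neg_le_one_sub_add_sq_div_two {s : ℝ} (hs : 0 ≤ s) :
    exp (-s) ≤ 1 - s + s ^ 2 / 2 := by
  have hcubic : 1 + s + s ^ 2 / 2 + s ^ 3 / 6 ≤ exp s := by
    simpa [Finset.sum_range_succ, Nat.factorial, add_assoc] using sum_le_exp_of_nonneg hs 4
  -- `(1 - s + s²/2)(1 + s + s²/2 + s³/6) = 1 + s³/6 + s⁴/12 + s⁵/12`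
  have hprod : 1 ≤ (1 - s + s ^ 2 / 2) * exp s := by
    have hq : 0 ≤ 1 - s + s ^ 2 / 2 := by nlinarith [sq_nonneg (s - 1)]
    calc (1 : ℝ) ≤ (1 - s + s ^ 2 / 2) * (1 + s + s ^ 2 / 2 + s ^ 3 / 6) := by
          nlinarith [pow_nonneg hs 3, pow_nonneg hs 4, pow_nonneg hs 5]
      _ ≤ _ := mul_le_mul_of_nonneg_left hcubic hq
  rw [exp_neg, inv_le_iff_one_le_mul₀ (exp_pos s)]
  linarith [mul_comm (exp s) (1 - s + s ^ 2 / 2)]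

lemma le_sub_sq_div_two_mul {A L m a : ℝ} (hL : 0 < L) (hLA : L ≤ 2 * A)
    (hm : 8 / 3 * A + 16 / 9 * L ≤ m) (ha : a ≤ A) : L ≤ (m - a) ^ 2 / (2 * m) := by
  have hA : 0 < A := by linarith
  rw [le_div_iff₀ (by linarith)]
  -- with `x = m - A`: `x (x - 2L) ≥ (5A/3 + 16L/9)(11A/9) ≥ 2AL`
  nlinarith [mul_le_mul (by linarith : 5 / 3 * A + 16 / 9 * L ≤ m - A)
    (by linarith : 11 / 9 * A ≤ m - A - 2 * L) (by linarith) (by linarith)]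

namespace ProbabilityTheory

variable {Ω ι : Type*} {mΩ : MeasurableSpace Ω} {μ : Measure Ω}

lemma iIndepFun.iIndepSet_preimage {β : ι → Type*} {mβ : ∀ i, MeasurableSpace (β i)}
    {f : ∀ i, Ω → β i} (h : iIndepFun f μ) {s : ∀ i, Set (β i)}
    (hs : ∀ i, MeasurableSet (s i)) : iIndepSet (fun i => f i ⁻¹' s i) μ := by
  rw [iIndepSet_iff_iIndep]
  refine iIndep_of_iIndep_of_le h fun i => MeasurableSpace.generateFrom_le ?_
  rintro _ rfl
  exact ⟨s i, hs i, rfl⟩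

variable [IsProbabilityMeasure μ]

lemma mgf_indicator_one {E : Set Ω} (hE : MeasurableSet E) (t : ℝ) :
    mgf (E.indicator 1) μ t = 1 + μ.real E * (exp t - 1) := by
  have hexp : (fun ω => exp (t * E.indicator 1 ω)) =
      fun ω => E.indicator (fun _ => exp t - 1) ω + 1 := by
    ext ω
    by_cases hω : ω ∈ E <;> simp [hω]
  rw [mgf, hexp, integral_add ((integrable_const _).indicator hE) (integrable_const 1),
    integral_indicator_const _ hE]
  simp only [smul_eq_mul, integral_const, probReal_univ, mul_one]
  ring

lemma mgf_indicator_one_le_exp {E : Set Ω} (hE : MeasurableSet E) (t : ℝ) :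
    mgf (E.indicator 1) μ t ≤ exp (μ.real E * (exp t - 1)) := by
  rw [mgf_indicator_one hE]
  linarith [add_one_le_exp (μ.real E * (exp t - 1))]

section SumIndicator

variable {E : ι → Set Ω} (hE : ∀ i, MeasurableSet (E i)) (s : Finset ι)
include hE

lemma mgf_sum_indicator_one_le_exp (hind : iIndepSet E μ) {p : ℝ}
    (hp : ∀ i ∈ s, μ.real (E i) = p) (t : ℝ) :
    mgf (∑ i ∈ s, (E i).indicator 1) μ t ≤ exp (s.card * p * (exp t - 1)) := by
  have hindep : iIndepFun (fun i => (E i).indicator (1 : Ω → ℝ)) μ := hind.iIndepFun_indicator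
  rw [hindep.mgf_sum (fun i => measurable_one.indicator (hE i)), mul_assoc, exp_nat_mul,
    ← Finset.prod_const]
  refine Finset.prod_le_prod (fun i _ => mgf_nonneg) fun i hi => ?_
  rw [← hp i hi]
  exact mgf_indicator_one_le_exp (hE i) t

lemma integrable_exp_mul_sum_indicator_one (t : ℝ) :
    Integrable (fun ω => exp (t * (∑ i ∈ s, (E i).indicator 1) ω)) μ := by
  simp only [Finset.sum_apply]
  refine integrable_exp_mul_of_mem_Icc (a := 0) (b := s.card)
    (Finset.measurable_sum s fun i _ => measurable_one.indicator (hE i)).aemeasurable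
    (Filter.Eventually.of_forall fun ω => ⟨Finset.sum_nonneg fun i _ => ?_, ?_⟩)
  · exact Set.indicator_nonneg (fun _ _ => zero_le_one) ω
  · simpa using Finset.sum_le_card_nsmul s (fun i => (E i).indicator (1 : Ω → ℝ) ω) 1
      fun i _ => Set.indicator_le_self' (fun _ _ => zero_le_one) ω

lemma measureReal_sum_indicator_one_le_le_exp (hind : iIndepSet E μ) {p : ℝ}
    (hp : ∀ i ∈ s, μ.real (E i) = p) {a : ℝ} (ha : a ≤ s.card * p) :
    μ.real {ω | (∑ i ∈ s, (E i).indicator 1) ω ≤ a} ≤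
      exp (-(s.card * p - a) ^ 2 / (2 * (s.card * p))) := by
  set m : ℝ := s.card * p
  rcases le_or_gt m 0 with hm | hm
  · refine measureReal_le_one.trans (one_le_exp ?_)
    exact div_nonneg_of_nonpos (neg_nonpos.2 (sq_nonneg _)) (by linarith)
  -- the exponent `-(m - a)² / (2m)` is `u a + m (-u + u²/2)` at its minimizer `u = (m - a)/m`
  set u := (m - a) / m with hu_def
  have hu : 0 ≤ u := div_nonneg (by linarith) hm.le
  calc μ.real {ω | (∑ i ∈ s, (E i).indicator 1) ω ≤ a}
      ≤ exp (u * a) * mgf (∑ i ∈ s, (E i).indicator 1) μ (-u) := by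
        simpa using measure_le_le_exp_mul_mgf a (neg_nonpos.2 hu)
          (integrable_exp_mul_sum_indicator_one hE s (-u))
    _ ≤ exp (u * a) * exp (m * (exp (-u) - 1)) :=
        mul_le_mul_of_nonneg_left (mgf_sum_indicator_one_le_exp hE s hind hp (-u))
          (exp_nonneg _)
    _ ≤ exp (u * a + m * (-u + u ^ 2 / 2)) := by
        rw [← exp_add]
        gcongr
        linarith [exp_neg_le_one_sub_add_sq_div_two hu]
    _ = exp (-(m - a) ^ 2 / (2 * m)) := by
        rw [hu_def]
        congr 1
        field_simp
        ring

end SumIndicator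

end ProbabilityTheory

lemma sub_one_le_and_log_two_mul_le_of_eq_ceil {K n τ : ℕ} (hK : 0 < K) {μ₀ T : ℝ}
    (hμpos : 0 < μ₀) (hμ1 : μ₀ ≤ 1) (hT : 2 ≤ T)
    (hn : n = ⌈log (2 * T) / (2 * μ₀ ^ 2)⌉₊)
    (hτ : τ = ⌈4 * K * log (2 * T) / (3 * μ₀ ^ 2) + 32 * K * log T / 9⌉₊) :
    (n : ℝ) - 1 ≤ τ * (1 / K) ∧
      log (2 * T) ≤ (τ * (1 / K) - (n - 1)) ^ 2 / (2 * (τ * (1 / K))) := by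
  set L := log (2 * T)
  set A := L / (2 * μ₀ ^ 2) with hA_def
  have hL : 0 < L := log_pos (by linarith)
  have hLA : L ≤ 2 * A := by
    rw [hA_def, mul_div_assoc', le_div_iff₀ (by positivity)]
    nlinarith [pow_le_one₀ hμpos.le hμ1 (n := 2)]
  have hm : 8 / 3 * A + 16 / 9 * L ≤ τ * (1 / K) := by
    have hlogT : L ≤ 2 * log T := by
      rw [show L = log 2 + log T from log_mul two_ne_zero (by positivity)]
      linarith [log_le_log two_pos hT]
    have hτ_ge : 4 * K * L / (3 * μ₀ ^ 2) + 32 * K * log T / 9 ≤ τ := hτ ▸ Nat.le_ceil _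
    rw [mul_one_div, le_div_iff₀ (Nat.cast_pos.2 hK), hA_def]
    calc (8 / 3 * (L / (2 * μ₀ ^ 2)) + 16 / 9 * L) * K
        = 4 * K * L / (3 * μ₀ ^ 2) + 16 / 9 * L * K := by ring
      _ ≤ 4 * K * L / (3 * μ₀ ^ 2) + 32 * K * log T / 9 := by nlinarith
      _ ≤ τ := hτ_ge
  have hn_le : (n : ℝ) - 1 ≤ A := by
    rw [hn]
    linarith [Nat.ceil_lt_add_one (by positivity : 0 ≤ A)]
  exact ⟨by linarith, le_sub_sq_div_two_mul hL hLA hm hn_le⟩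

/-- lower tail of a Binomial(τ', 1/K): among
`τ' = ⌈4K log(2T)/(3μ²) + 32K log(T)/9⌉` i.i.d. uniform pulls on `[K]`, a fixed arm
is pulled fewer than `n' = ⌈log(2T)/(2μ²)⌉` times with probability at most `1/(2T)`. -/
theorem stmt_10 {Ω : Type*} [MeasureSpace Ω] [IsProbabilityMeasure (ℙ : Measure Ω)]
    (K : ℕ) (hK : 0 < K)
    (pol : ℕ → Ω → Fin K) (hmeas : ∀ t, Measurable (pol t))
    (hindep : iIndepFun pol)
    (hunif : ∀ t k, ℙ {ω | pol t ω = k} = 1 / (K : ENNReal))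
    (μ₀ : ℝ) (hμpos : 0 < μ₀) (hμ1 : μ₀ ≤ 1) (T : ℝ) (hT : 2 ≤ T)
    (n' : ℕ) (hn' : n' = ⌈Real.log (2 * T) / (2 * μ₀ ^ 2)⌉₊)
    (τ' : ℕ) (hτ' : τ' = ⌈4 * K * Real.log (2 * T) / (3 * μ₀ ^ 2) +
      32 * K * Real.log T / 9⌉₊)
    (k : Fin K) :
    (ℙ {ω | ((Finset.range τ').filter (fun t => pol t ω = k)).card < n'}).toReal ≤
      1 / (2 * T) := by
  set S : Ω → ℝ := ∑ t ∈ Finset.range τ', (pol t ⁻¹' {k}).indicator 1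
  have hp : ∀ t ∈ Finset.range τ', volume.real (pol t ⁻¹' {k}) = 1 / K := fun t _ => by
    rw [measureReal_def, show pol t ⁻¹' {k} = {ω | pol t ω = k} from rfl, hunif]
    simp
  have hevent : {ω | ((Finset.range τ').filter (fun t => pol t ω = k)).card < n'} ⊆
      {ω | S ω ≤ (n' : ℝ) - 1} := by
    intro ω hω
    have hcard : (((Finset.range τ').filter (fun t => pol t ω = k)).card : ℝ) + 1 ≤ n' := by
      exact_mod_cast hω
    classical
    simp only [S, Finset.sum_apply, Set.indicator_apply, Set.mem_preimage,
      Set.mem_singleton_iff, Pi.one_apply, Finset.sum_boole, Set.mem_ofPred_eq]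
    linarith
  obtain ⟨hn'_le, hexponent⟩ := sub_one_le_and_log_two_mul_le_of_eq_ceil hK hμpos hμ1 hT hn' hτ'
  calc volume.real {ω | ((Finset.range τ').filter (fun t => pol t ω = k)).card < n'}
      ≤ volume.real {ω | S ω ≤ (n' : ℝ) - 1} := measureReal_mono hevent
    _ ≤ exp (-(τ' * (1 / K) - (n' - 1)) ^ 2 / (2 * (τ' * (1 / K)))) := by
        have hchernoff := measureReal_sum_indicator_one_le_le_exp
          (fun t => hmeas t (measurableSet_singleton k)) (Finset.range τ')
          (hindep.iIndepSet_preimage fun _ => measurableSet_singleton k) hp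
          (a := n' - 1) (by rwa [Finset.card_range])
        rwa [Finset.card_range] at hchernoff
    _ ≤ exp (-log (2 * T)) := by rw [neg_div, exp_le_exp, neg_le_neg_iff]; exact hexponent
    _ = 1 / (2 * T) := by rw [exp_neg, exp_log (by linarith), one_div]
end

section
/- Let Δ_min ∈ (0,1], M, K, T positive integers. Under the TAL algorithm with UCB1 clients with parameters γ₁ = 1, γ₂ = 0, assuming (i) the learning phase ends by T₁ = O(K log(KT)/(M Δ_min²)) with each client having at most ⌈T₁/K⌉ pulls per arm, and (ii) the warm-start pull bound of each suboptimal arm k for client m is O(T₁/(K μ_{†,m}) + log(T)/μ_{†,m}²) where μ_{†,m} > 0 is client m's local mean of the global optimal arm, the total global regret satisfies R_F(T) = O(Σ_m Σ_{k≠k†} [Δ_k log(KT)/(μ_{†,m} M Δ_min²) + Δ_k log(KT)/μ_{†,m}²]). -/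
open Real Finset

/-!
Each summand `Δ_k · (pulls)` of the regret is bounded separately. Write `A = log (K T)` and
`μ = μ_{†,m}`. Since `K T ≥ 3`, `A ≥ 1`, hence `A / μ² ≥ 1` absorbs the `+ 1` lost in
`⌈T₁ / K⌉ ≤ T₁ / K + 1`. Both `T₁ / K` and `T₁ / (K μ)` are at most `C₁ A / (μ M Δ_min²)`
because `μ ≤ 1`, and `log T / μ² ≤ A / μ²`, so all pulls of a suboptimal arm are
`O(A / (μ M Δ_min²) + A / μ²)`.
-/

lemma one_le_log_of_three_le {x : ℝ} (hx : 3 ≤ x) : 1 ≤ log x := by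
  rw [le_log_iff_exp_le (by linarith)]
  linarith [exp_one_lt_three]

lemma div_mul_le_mul_div_of_le {T₁ C K A M D μ : ℝ} (hK : 0 < K) (hμ : 0 < μ)
    (h : T₁ ≤ C * K * A / (M * D)) : T₁ / (K * μ) ≤ C * (A / (μ * M * D)) :=
  calc T₁ / (K * μ) ≤ C * K * A / (M * D) / (K * μ) := by gcongr
    _ = C * (A / (μ * M * D)) := by field_simp

lemma le_add_of_le_natCeil {p u c b : ℝ} (hu0 : 0 ≤ u) (hp : p ≤ ⌈u⌉₊) (hu : u ≤ c)
    (hb : 1 ≤ b) : p ≤ c + b := by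
  linarith [Nat.ceil_lt_add_one hu0]

lemma pulls_le_of_phase_bounds {C₁ C₂ K A T M D μ T₁ pL pT : ℝ} (hC₁ : 0 ≤ C₁) (hC₂ : 0 ≤ C₂)
    (hK : 0 < K) (hA : 1 ≤ A) (hTA : log T ≤ A) (hM : 0 < M) (hD : 0 < D)
    (hμ0 : 0 < μ) (hμ1 : μ ≤ 1) (hT₁0 : 0 ≤ T₁) (hT₁ : T₁ ≤ C₁ * K * A / (M * D))
    (hL : pL ≤ ⌈T₁ / K⌉₊) (hT : pT ≤ C₂ * (T₁ / (K * μ) + log T / μ ^ 2)) :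
    pL + pT ≤ (1 + C₁) * (1 + C₂) * (A / (μ * M * D) + A / μ ^ 2) := by
  set a := A / (μ * M * D)
  set b := A / μ ^ 2
  have ha : 0 ≤ a := by positivity
  have hb : 1 ≤ b := by
    rw [le_div_iff₀ (by positivity)]
    nlinarith
  have hT₁μ : T₁ / (K * μ) ≤ C₁ * a := div_mul_le_mul_div_of_le hK hμ0 hT₁
  have hT₁K : T₁ / K ≤ C₁ * a :=
    (div_le_div_of_nonneg_left hT₁0 (by positivity) (by nlinarith)).trans hT₁μ
  have hlog : log T / μ ^ 2 ≤ b := div_le_div_of_nonneg_right hTA (by positivity)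
  have hL' : pL ≤ C₁ * a + b := le_add_of_le_natCeil (by positivity) hL hT₁K hb
  have hT' : pT ≤ C₂ * (C₁ * a + b) :=
    hT.trans (mul_le_mul_of_nonneg_left (add_le_add hT₁μ hlog) hC₂)
  nlinarith [mul_nonneg hC₁ (zero_le_one.trans hb), mul_nonneg hC₂ (mul_nonneg hC₁ ha)]

/-- composition theorem for TAL with UCB1 clients (γ₁ = 1, γ₂ = 0).
Given (i) a learning phase ending by `T₁ = O(K log(KT)/(M Δ_min²))` with at most
`⌈T₁/K⌉` learning-phase pulls per arm per client, and (ii) warm-start teaching-phase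
pulls of each suboptimal arm `k` by client `m` bounded by
`O(T₁/(K μ_{†,m}) + log(T)/μ_{†,m}²)`, the global regret
`R_F = Σ_m Σ_{k≠k†} Δ_k·(pulls of k by m)` satisfies
`R_F = O(Σ_m Σ_{k≠k†} [Δ_k log(KT)/(μ_{†,m} M Δ_min²) + Δ_k log(KT)/μ_{†,m}²])`. -/
theorem stmt_15 : ∀ C₁ > (0:ℝ), ∀ C₂ > (0:ℝ), ∃ C > (0:ℝ),
    ∀ (M K T : ℕ), 0 < M → 0 < K → 3 ≤ T →
    ∀ (kd : Fin K) (Δ : Fin K → ℝ) (Δmin : ℝ),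
      Δmin ∈ Set.Ioc (0:ℝ) 1 →
      (∀ k, k ≠ kd → Δmin ≤ Δ k ∧ Δ k ≤ 1) →
    ∀ (μd : Fin M → ℝ), (∀ m, 0 < μd m ∧ μd m ≤ 1) →
    ∀ (T₁ : ℝ), 0 ≤ T₁ →
      T₁ ≤ C₁ * K * Real.log (K * T) / (M * Δmin ^ 2) →
    ∀ (pullsL pullsT : Fin M → Fin K → ℝ),
      -- (i) learning-phase pulls: at most ⌈T₁/K⌉ per arm per client
      (∀ m k, 0 ≤ pullsL m k ∧ pullsL m k ≤ (⌈T₁ / K⌉₊ : ℝ)) →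
      -- (ii) warm-start teaching-phase pulls of each suboptimal arm
      (∀ m k, k ≠ kd → 0 ≤ pullsT m k ∧
        pullsT m k ≤ C₂ * (T₁ / (K * μd m) + Real.log T / (μd m) ^ 2)) →
    ∀ (RF : ℝ),
      RF = ∑ m : Fin M, ∑ k ∈ Finset.univ.filter (· ≠ kd),
        Δ k * (pullsL m k + pullsT m k) →
    RF ≤ C * ∑ m : Fin M, ∑ k ∈ Finset.univ.filter (· ≠ kd),
      (Δ k * Real.log (K * T) / (μd m * M * Δmin ^ 2) +
        Δ k * Real.log (K * T) / (μd m) ^ 2) := by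
  intro C₁ hC₁ C₂ hC₂
  refine ⟨(1 + C₁) * (1 + C₂), by positivity, ?_⟩
  intro M K T hM hK hT kd Δ Δmin hΔmin hΔ μd hμ T₁ hT₁0 hT₁ pullsL pullsT hL hTe RF hRF
  have hK1 : (1 : ℝ) ≤ K := by exact_mod_cast hK
  have hT3 : (3 : ℝ) ≤ T := by exact_mod_cast hT
  have hTKT : (T : ℝ) ≤ K * T := le_mul_of_one_le_left (by linarith) hK1
  have hlogT : log T ≤ log (K * T) := log_le_log (by linarith) hTKT
  rw [hRF, mul_sum]
  refine sum_le_sum fun m _ => ?_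
  rw [mul_sum]
  refine sum_le_sum fun k hk => ?_
  have hkd := (mem_filter.mp hk).2
  have hpulls := pulls_le_of_phase_bounds hC₁.le hC₂.le (by linarith)
    (one_le_log_of_three_le (hT3.trans hTKT)) hlogT
    (by exact_mod_cast hM) (pow_pos hΔmin.1 2) (hμ m).1 (hμ m).2 hT₁0 hT₁
    (hL m k).2 (hTe m k hkd).2
  calc Δ k * (pullsL m k + pullsT m k)
      ≤ Δ k * ((1 + C₁) * (1 + C₂) *
          (log (K * T) / (μd m * M * Δmin ^ 2) + log (K * T) / μd m ^ 2)) :=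
        mul_le_mul_of_nonneg_left hpulls (hΔmin.1.le.trans (hΔ k hkd).1)
    _ = _ := by ring
end
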